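/- Let n ≥ 1, let g : ℝ → (n×n real matrices) be differentiable at t₀ with det g(t₀) > 0, let A₀ be an n×n real matrix with trace(g(t₀)⁻¹·A₀) = −1, let p₀ ∈ ℝ, and suppose g′(t₀) = −2·A₀ − (2/n + p₀)·g(t₀). Then the function t ↦ √(det g(t)) is differentiable at t₀ with derivative −(n/2)·p₀·√(det g(t₀)). (Local-coordinate form of the volume-density decay ∂/∂t dμ_g = −(n/2)·p·dμ_g along the conformal Ricci flow, the key step in the global and local volume decay results.) -/

import Mathlib

/-! Jacobi's formula `(det g)' = det g · tr(g⁻¹ g')` turns the flow equation into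
`(det g)' = det g · (2 - (2/n + p₀) n) = -n p₀ det g`, since `tr(g⁻¹ A₀) = -1` and `tr(g⁻¹ g) = n`.
Taking the square root halves this logarithmic derivative. -/

open Matrix

namespace Matrix

variable {ι : Type*} [Fintype ι] [DecidableEq ι]

section CommRing

variable {R : Type*} [CommRing R]

theorem det_updateRow_eq_sum_adjugate_mul (A : Matrix ι ι R) (i : ι) (v : ι → R) :
    (A.updateRow i v).det = ∑ j, A.adjugate j i * v j := by
  rw [← det_transpose, ← updateCol_transpose, ← cramer_apply, cramer_eq_adjugate_mulVec,
    ← adjugate_transpose]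
  rfl

theorem sum_det_updateRow_eq_trace_adjugate_mul (A B : Matrix ι ι R) :
    ∑ i, (A.updateRow i (B i)).det = trace (A.adjugate * B) := by
  simp only [det_updateRow_eq_sum_adjugate_mul, trace, diag_apply, mul_apply]
  exact Finset.sum_comm

theorem adjugate_eq_det_smul_inv {A : Matrix ι ι R} (hA : IsUnit A.det) :
    A.adjugate = A.det • A⁻¹ := by
  rw [inv_def, smul_smul, Ring.mul_inverse_cancel _ hA, one_smul]

end CommRing

variable {𝕜 : Type*} [NontriviallyNormedField 𝕜]

noncomputable def detRowContinuousMultilinear :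
    ContinuousMultilinearMap 𝕜 (fun _ : ι => ι → 𝕜) 𝕜 where
  toMultilinearMap := (detRowAlternating : (ι → 𝕜) [⋀^ι]→ₗ[𝕜] 𝕜).toMultilinearMap
  cont := continuous_id.matrix_det

theorem hasDerivAt_det {g : 𝕜 → Matrix ι ι 𝕜} {g' : Matrix ι ι 𝕜} {t : 𝕜}
    (hg : ∀ i j, HasDerivAt (fun s => g s i j) (g' i j) t) :
    HasDerivAt (fun s => (g s).det) (trace ((g t).adjugate * g')) t := by
  have hrows : HasDerivAt (fun s i => g s i) (fun i => g' i) t :=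
    hasDerivAt_pi.2 fun i => hasDerivAt_pi.2 (hg i)
  have hdet := (detRowContinuousMultilinear.hasFDerivAt (fun i => g t i)).comp_hasDerivAt t hrows
  rw [ContinuousMultilinearMap.linearDeriv_apply] at hdet
  rw [← sum_det_updateRow_eq_trace_adjugate_mul]
  exact hdet

theorem hasDerivAt_det_of_det_ne_zero {g : 𝕜 → Matrix ι ι 𝕜} {g' : Matrix ι ι 𝕜} {t : 𝕜}
    (hg : ∀ i j, HasDerivAt (fun s => g s i j) (g' i j) t) (ht : (g t).det ≠ 0) :
    HasDerivAt (fun s => (g s).det) ((g t).det * trace ((g t)⁻¹ * g')) t := by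
  simpa only [adjugate_eq_det_smul_inv ht.isUnit, smul_mul, trace_smul, smul_eq_mul]
    using hasDerivAt_det hg

theorem trace_inv_mul_smul_add_smul_self {K : Type*} [Field K] {A : Matrix ι ι K}
    (hA : A.det ≠ 0) (B : Matrix ι ι K) (a b : K) :
    trace (A⁻¹ * (a • B + b • A)) = a * trace (A⁻¹ * B) + b * Fintype.card ι := by
  rw [mul_add, Matrix.mul_smul, Matrix.mul_smul, nonsing_inv_mul A hA.isUnit, trace_add, trace_smul,
    trace_smul, trace_one, smul_eq_mul, smul_eq_mul]

end Matrix

theorem HasDerivAt.sqrt_of_eq_mul {f : ℝ → ℝ} {c x : ℝ} (hf : HasDerivAt f (c * f x) x)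
    (hx : 0 < f x) : HasDerivAt (fun y => √(f y)) (c / 2 * √(f x)) x := by
  refine (hf.sqrt hx.ne').congr_deriv ?_
  have hsqrt : 0 < √(f x) := Real.sqrt_pos.2 hx
  field_simp
  rw [Real.sq_sqrt hx.le]

/-- Local-coordinate form of the volume-density decay `∂/∂t dμ_g = −(n/2)·p·dμ_g`
along the conformal Ricci flow: if `g′(t₀) = −2A₀ − (2/n + p₀)·g(t₀)` with
`tr_{g(t₀)} A₀ = −1` and `det g(t₀) > 0`, then `t ↦ √(det g(t))` has derivative
`−(n/2)·p₀·√(det g(t₀))` at `t₀`. -/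
theorem conformal_ricci_volume_density_decay
    (n : ℕ) (hn : 1 ≤ n) (t₀ : ℝ)
    (g : ℝ → Matrix (Fin n) (Fin n) ℝ) (g' A₀ : Matrix (Fin n) (Fin n) ℝ)
    (p₀ : ℝ)
    (hg : ∀ i j, HasDerivAt (fun t => g t i j) (g' i j) t₀)
    (hdet : 0 < (g t₀).det)
    (htr : Matrix.trace ((g t₀)⁻¹ * A₀) = -1)
    (hflow : g' = (-2 : ℝ) • A₀ - (2 / (n : ℝ) + p₀) • g t₀) :
    HasDerivAt (fun t => Real.sqrt ((g t).det))
      (-((n : ℝ) / 2) * p₀ * Real.sqrt ((g t₀).det)) t₀ := by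
  have hn₀ : (n : ℝ) ≠ 0 := Nat.cast_ne_zero.2 (by omega)
  have htrace : trace ((g t₀)⁻¹ * g') = -n * p₀ := by
    rw [hflow, sub_eq_add_neg, ← neg_smul, trace_inv_mul_smul_add_smul_self hdet.ne', htr,
      Fintype.card_fin]
    field_simp
    ring
  have hvol := hasDerivAt_det_of_det_ne_zero hg hdet.ne'
  rw [htrace, mul_comm] at hvol
  convert hvol.sqrt_of_eq_mul hdet using 1
  ring
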